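/- Let U ⊆ ℝ² be an open set, f : U → ℝ smooth with f_x and f_y nowhere zero on U, and b, B : U → ℝ smooth with b nowhere zero. Set H = f_{xy}/(f_x·f_y), ∂₁ = −(1/f_x)·∂/∂x, ∂₂ = −(1/f_y)·∂/∂y. If smooth functions σ₁, σ₂ : U → ℝ satisfy the system ∂₂(σ₁) = H, ∂₁(σ₂) = H, and b·∂₁(σ₁) + ∂₂(σ₂) = B on U, then all their second-order derivatives are determined by the single quantity ∂₁(σ₁); in particular, on U: ∂₁(∂₁(σ₁)) = (∂₁(B) − ∂₂(H) + H² − H·B)/b + (H − ∂₁(b)/b)·∂₁(σ₁), and ∂₂(∂₂(σ₂)) = ∂₂(B) − b·∂₁(H) + b·H² − (∂₂(b) + b·H)·∂₁(σ₁). -/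

import Mathlib

/-- Partial derivative with respect to the first coordinate. -/
noncomputable def pdx (f : ℝ × ℝ → ℝ) : ℝ × ℝ → ℝ :=
  fun q => deriv (fun t => f (t, q.2)) q.1

/-- Partial derivative with respect to the second coordinate. -/
noncomputable def pdy (f : ℝ × ℝ → ℝ) : ℝ × ℝ → ℝ :=
  fun q => deriv (fun t => f (q.1, t)) q.2

/-- The vector field `∂₁ = -(1/f_x)·∂/∂x` applied to a function `p`. -/
noncomputable def D1 (f p : ℝ × ℝ → ℝ) : ℝ × ℝ → ℝ :=
  fun q => -(pdx p q) / pdx f q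

/-- The vector field `∂₂ = -(1/f_y)·∂/∂y` applied to a function `p`. -/
noncomputable def D2 (f p : ℝ × ℝ → ℝ) : ℝ × ℝ → ℝ :=
  fun q => -(pdy p q) / pdy f q

/-- `H = f_{xy}/(f_x·f_y)`. -/
noncomputable def Hf (f : ℝ × ℝ → ℝ) : ℝ × ℝ → ℝ :=
  fun q => pdy (pdx f) q / (pdx f q * pdy f q)

/-- A differential 1-form `a dx + c dy` on (an open subset of) `ℝ²`, recorded by its
pair of coefficient functions `(a, c)`. -/
abbrev Form1 : Type := (ℝ × ℝ → ℝ) × (ℝ × ℝ → ℝ)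

/-- The coefficient of `dx ∧ dy` in the wedge product of two 1-forms. -/
noncomputable def wedge (α β : Form1) : ℝ × ℝ → ℝ :=
  fun q => α.1 q * β.2 q - α.2 q * β.1 q

/-- The coefficient of `dx ∧ dy` in the exterior derivative of a 1-form. -/
noncomputable def extd (α : Form1) : ℝ × ℝ → ℝ :=
  fun q => pdx α.2 q - pdy α.1 q

/-- Multiplication of a 1-form by a function. -/
noncomputable def smul1 (s : ℝ × ℝ → ℝ) (α : Form1) : Form1 :=
  (fun q => s q * α.1 q, fun q => s q * α.2 q)

/-- The coordinate 1-form `dx`. -/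
noncomputable def dX : Form1 := (fun _ => 1, fun _ => 0)

/-- The coordinate 1-form `dy`. -/
noncomputable def dY : Form1 := (fun _ => 0, fun _ => 1)

open Topology Filter

section helpers

lemma pdx_eq_fderiv {g : ℝ × ℝ → ℝ} {q : ℝ × ℝ} (hg : DifferentiableAt ℝ g q) :
    pdx g q = fderiv ℝ g q (1, 0) := by
  have h1 : HasDerivAt (fun t : ℝ => (t, q.2)) ((1 : ℝ), (0 : ℝ)) q.1 :=
    HasDerivAt.prodMk (hasDerivAt_id q.1) (hasDerivAt_const _ _)
  have h2 := hg.hasFDerivAt.comp_hasDerivAt q.1 (by simpa using h1)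
  exact h2.deriv

lemma pdy_eq_fderiv {g : ℝ × ℝ → ℝ} {q : ℝ × ℝ} (hg : DifferentiableAt ℝ g q) :
    pdy g q = fderiv ℝ g q (0, 1) := by
  have h1 : HasDerivAt (fun t : ℝ => (q.1, t)) ((0 : ℝ), (1 : ℝ)) q.2 :=
    HasDerivAt.prodMk (hasDerivAt_const _ _) (hasDerivAt_id q.2)
  have h2 := hg.hasFDerivAt.comp_hasDerivAt q.2 (by simpa using h1)
  exact h2.deriv

lemma hasDerivAt_pdx {g : ℝ × ℝ → ℝ} {q : ℝ × ℝ} (hg : DifferentiableAt ℝ g q) :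
    HasDerivAt (fun t => g (t, q.2)) (pdx g q) q.1 := by
  have h1 : HasDerivAt (fun t : ℝ => (t, q.2)) ((1 : ℝ), (0 : ℝ)) q.1 :=
    HasDerivAt.prodMk (hasDerivAt_id q.1) (hasDerivAt_const _ _)
  have h2 := hg.hasFDerivAt.comp_hasDerivAt q.1 (by simpa using h1)
  rw [pdx_eq_fderiv hg]; exact h2

lemma hasDerivAt_pdy {g : ℝ × ℝ → ℝ} {q : ℝ × ℝ} (hg : DifferentiableAt ℝ g q) :
    HasDerivAt (fun t => g (q.1, t)) (pdy g q) q.2 := by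
  have h1 : HasDerivAt (fun t : ℝ => (q.1, t)) ((0 : ℝ), (1 : ℝ)) q.2 :=
    HasDerivAt.prodMk (hasDerivAt_const _ _) (hasDerivAt_id q.2)
  have h2 := hg.hasFDerivAt.comp_hasDerivAt q.2 (by simpa using h1)
  rw [pdy_eq_fderiv hg]; exact h2

lemma diffAt_of_cdo {U : Set (ℝ × ℝ)} (hU : IsOpen U) {g : ℝ × ℝ → ℝ}
    (hg : ContDiffOn ℝ (⊤ : ℕ∞) g U) {q : ℝ × ℝ} (hq : q ∈ U) :
    DifferentiableAt ℝ g q :=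
  (hg.contDiffAt (hU.mem_nhds hq)).differentiableAt (by simp)

lemma contDiffOn_pdx {U : Set (ℝ × ℝ)} (hU : IsOpen U) {g : ℝ × ℝ → ℝ}
    (hg : ContDiffOn ℝ (⊤ : ℕ∞) g U) : ContDiffOn ℝ (⊤ : ℕ∞) (pdx g) U := by
  have h1 : ContDiffOn ℝ (⊤ : ℕ∞) (fun p => fderiv ℝ g p (1, 0)) U :=
    (hg.fderiv_of_isOpen hU (m := (⊤ : ℕ∞)) (le_of_eq rfl)).clm_apply contDiffOn_const
  exact h1.congr fun p hp => pdx_eq_fderiv (diffAt_of_cdo hU hg hp)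

lemma contDiffOn_pdy {U : Set (ℝ × ℝ)} (hU : IsOpen U) {g : ℝ × ℝ → ℝ}
    (hg : ContDiffOn ℝ (⊤ : ℕ∞) g U) : ContDiffOn ℝ (⊤ : ℕ∞) (pdy g) U := by
  have h1 : ContDiffOn ℝ (⊤ : ℕ∞) (fun p => fderiv ℝ g p (0, 1)) U :=
    (hg.fderiv_of_isOpen hU (m := (⊤ : ℕ∞)) (le_of_eq rfl)).clm_apply contDiffOn_const
  exact h1.congr fun p hp => pdy_eq_fderiv (diffAt_of_cdo hU hg hp)

lemma clairaut {U : Set (ℝ × ℝ)} (hU : IsOpen U) {g : ℝ × ℝ → ℝ}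
    (hg : ContDiffOn ℝ (⊤ : ℕ∞) g U) {q : ℝ × ℝ} (hq : q ∈ U) :
    pdx (pdy g) q = pdy (pdx g) q := by
  have hfd : ContDiffOn ℝ (⊤ : ℕ∞) (fderiv ℝ g) U :=
    hg.fderiv_of_isOpen hU (m := (⊤ : ℕ∞)) (le_of_eq rfl)
  have hfd' : DifferentiableAt ℝ (fderiv ℝ g) q :=
    (hfd.contDiffAt (hU.mem_nhds hq)).differentiableAt (by simp)
  have hsym : ∀ v w, fderiv ℝ (fderiv ℝ g) q v w = fderiv ℝ (fderiv ℝ g) q w v := by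
    apply second_derivative_symmetric_of_eventually (f := g)
    · filter_upwards [hU.mem_nhds hq] with p hp
      exact (diffAt_of_cdo hU hg hp).hasFDerivAt
    · exact hfd'.hasFDerivAt
  have hy : ∀ p ∈ U, pdy g p = (fun p => fderiv ℝ g p (0, 1)) p :=
    fun p hp => pdy_eq_fderiv (diffAt_of_cdo hU hg hp)
  have hx : ∀ p ∈ U, pdx g p = (fun p => fderiv ℝ g p (1, 0)) p :=
    fun p hp => pdx_eq_fderiv (diffAt_of_cdo hU hg hp)
  have hUy : (fun p => fderiv ℝ g p (0, 1)) =ᶠ[𝓝 q] pdy g :=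
    eventually_of_mem (hU.mem_nhds hq) fun p hp => (hy p hp).symm
  have hUx : (fun p => fderiv ℝ g p (1, 0)) =ᶠ[𝓝 q] pdx g :=
    eventually_of_mem (hU.mem_nhds hq) fun p hp => (hx p hp).symm
  have dy : DifferentiableAt ℝ (fun p => fderiv ℝ g p (0, 1)) q :=
    hfd'.clm_apply (differentiableAt_const _)
  have dx : DifferentiableAt ℝ (fun p => fderiv ℝ g p (1, 0)) q :=
    hfd'.clm_apply (differentiableAt_const _)
  have e1 : pdx (pdy g) q = fderiv ℝ (fun p => fderiv ℝ g p (0, 1)) q (1, 0) := by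
    rw [pdx_eq_fderiv (dy.congr_of_eventuallyEq hUy.symm)]
    rw [Filter.EventuallyEq.fderiv_eq hUy.symm]
  have e2 : pdy (pdx g) q = fderiv ℝ (fun p => fderiv ℝ g p (1, 0)) q (0, 1) := by
    rw [pdy_eq_fderiv (dx.congr_of_eventuallyEq hUx.symm)]
    rw [Filter.EventuallyEq.fderiv_eq hUx.symm]
  rw [e1, e2, fderiv_clm_apply hfd' (differentiableAt_const _),
      fderiv_clm_apply hfd' (differentiableAt_const _)]
  simp [hsym (1, 0) (0, 1)]

lemma pdx_congr {U : Set (ℝ × ℝ)} (hU : IsOpen U) {g h : ℝ × ℝ → ℝ}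
    (he : ∀ p ∈ U, g p = h p) {q : ℝ × ℝ} (hq : q ∈ U) : pdx g q = pdx h q := by
  apply Filter.EventuallyEq.deriv_eq
  have hc : Continuous (fun t : ℝ => (t, q.2)) := continuous_id.prodMk continuous_const
  have hmem : {t : ℝ | (t, q.2) ∈ U} ∈ 𝓝 q.1 :=
    (hU.preimage hc).mem_nhds (by simpa using hq)
  filter_upwards [hmem] with t ht using he _ ht

lemma pdy_congr {U : Set (ℝ × ℝ)} (hU : IsOpen U) {g h : ℝ × ℝ → ℝ}
    (he : ∀ p ∈ U, g p = h p) {q : ℝ × ℝ} (hq : q ∈ U) : pdy g q = pdy h q := by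
  apply Filter.EventuallyEq.deriv_eq
  have hc : Continuous (fun t : ℝ => (q.1, t)) := continuous_const.prodMk continuous_id
  have hmem : {t : ℝ | (q.1, t) ∈ U} ∈ 𝓝 q.2 :=
    (hU.preimage hc).mem_nhds (by simpa using hq)
  filter_upwards [hmem] with t ht using he _ ht

end helpers


/-- first prolongation of the reduced Samuelson system
`∂₂σ₁ = H`, `∂₁σ₂ = H`, `b·∂₁σ₁ + ∂₂σ₂ = B`: the second-order derivatives are
determined by `∂₁σ₁`; in particular
`∂₁∂₁σ₁ = (∂₁B - ∂₂H + H² - H·B)/b + (H - ∂₁b/b)·∂₁σ₁` and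
`∂₂∂₂σ₂ = ∂₂B - b∂₁H + bH² - (∂₂b + bH)·∂₁σ₁` on `U`. -/
theorem reduced_system_first_prolongation
    (U : Set (ℝ × ℝ)) (hU : IsOpen U)
    (f : ℝ × ℝ → ℝ) (hf : ContDiffOn ℝ (⊤ : ℕ∞) f U)
    (hfx : ∀ q ∈ U, pdx f q ≠ 0) (hfy : ∀ q ∈ U, pdy f q ≠ 0)
    (b B : ℝ × ℝ → ℝ)
    (hb : ContDiffOn ℝ (⊤ : ℕ∞) b U) (hB : ContDiffOn ℝ (⊤ : ℕ∞) B U)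
    (hbne : ∀ q ∈ U, b q ≠ 0)
    (σ₁ σ₂ : ℝ × ℝ → ℝ)
    (hσ₁ : ContDiffOn ℝ (⊤ : ℕ∞) σ₁ U) (hσ₂ : ContDiffOn ℝ (⊤ : ℕ∞) σ₂ U)
    (e₁ : ∀ q ∈ U, D2 f σ₁ q = Hf f q)
    (e₂ : ∀ q ∈ U, D1 f σ₂ q = Hf f q)
    (e₃ : ∀ q ∈ U, b q * D1 f σ₁ q + D2 f σ₂ q = B q) :
    ∀ q ∈ U,
      D1 f (D1 f σ₁) q =
        (D1 f B q - D2 f (Hf f) q + Hf f q ^ 2 - Hf f q * B q) / b q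
          + (Hf f q - D1 f b q / b q) * D1 f σ₁ q ∧
      D2 f (D2 f σ₂) q =
        D2 f B q - b q * D1 f (Hf f) q + b q * Hf f q ^ 2
          - (D2 f b q + b q * Hf f q) * D1 f σ₁ q := by
  -- smoothness of auxiliary functions
  have hpxf := contDiffOn_pdx hU hf
  have hpyf := contDiffOn_pdy hU hf
  have hfxyO := contDiffOn_pdy hU hpxf
  have hH : ContDiffOn ℝ (⊤ : ℕ∞) (Hf f) U :=
    hfxyO.div (hpxf.mul hpyf) fun p hp => mul_ne_zero (hfx p hp) (hfy p hp)
  have hs : ContDiffOn ℝ (⊤ : ℕ∞) (D1 f σ₁) U :=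
    ((contDiffOn_pdx hU hσ₁).neg).div hpxf hfx
  -- pointwise identities on U
  have E1 : ∀ p ∈ U, pdy σ₁ p = -(Hf f p * pdy f p) := by
    intro p hp
    have h0 := hfy p hp
    have h := e₁ p hp
    simp only [D2] at h
    field_simp at h
    linarith
  have E1' : ∀ p ∈ U, pdx σ₁ p = -(D1 f σ₁ p * pdx f p) := by
    intro p hp
    have h0 := hfx p hp
    simp only [D1]
    field_simp
  have E2 : ∀ p ∈ U, pdx σ₂ p = -(Hf f p * pdx f p) := by
    intro p hp
    have h0 := hfx p hp
    have h := e₂ p hp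
    simp only [D1] at h
    field_simp at h
    linarith
  have E3 : ∀ p ∈ U, pdy σ₂ p = -((B p - b p * D1 f σ₁ p) * pdy f p) := by
    intro p hp
    have h := e₃ p hp
    simp only [D2] at h
    have hy := hfy p hp
    field_simp at h ⊢
    linarith
  have E3' : ∀ p ∈ U, D2 f σ₂ p = B p - b p * D1 f σ₁ p := by
    intro p hp
    have h := e₃ p hp
    linarith
  intro q hq
  -- differentiability at q of everything needed
  have dH := diffAt_of_cdo hU hH hq
  have db := diffAt_of_cdo hU hb hq
  have dB := diffAt_of_cdo hU hB hq
  have ds := diffAt_of_cdo hU hs hq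
  have dpxf := diffAt_of_cdo hU hpxf hq
  have dpyf := diffAt_of_cdo hU hpyf hq
  -- Clairaut for f
  have cf : pdx (pdy f) q = pdy (pdx f) q := clairaut hU hf hq
  -- basic relation: Hf f q * (fx * fy) = fxy
  have E0 : Hf f q * (pdx f q * pdy f q) = pdy (pdx f) q := by
    have h1 := hfx q hq
    have h2 := hfy q hq
    simp only [Hf]
    field_simp
  -- Equation (i) from σ₁
  have eqI : pdy (D1 f σ₁) q * pdx f q + D1 f σ₁ q * pdy (pdx f) q
      = pdx (Hf f) q * pdy f q + Hf f q * pdy (pdx f) q := by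
    have c1 : pdx (pdy σ₁) q = pdx (fun p => -(Hf f p * pdy f p)) q :=
      pdx_congr hU E1 hq
    have c2 : pdx (fun p => -(Hf f p * pdy f p)) q
        = -(pdx (Hf f) q * pdy f q + Hf f q * pdx (pdy f) q) :=
      (((hasDerivAt_pdx dH).mul (hasDerivAt_pdx dpyf)).neg).deriv
    have c3 : pdy (pdx σ₁) q = pdy (fun p => -(D1 f σ₁ p * pdx f p)) q :=
      pdy_congr hU E1' hq
    have c4 : pdy (fun p => -(D1 f σ₁ p * pdx f p)) q
        = -(pdy (D1 f σ₁) q * pdx f q + D1 f σ₁ q * pdy (pdx f) q) :=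
      (((hasDerivAt_pdy ds).mul (hasDerivAt_pdy dpxf)).neg).deriv
    have c5 := clairaut hU hσ₁ hq
    rw [c1, c2, cf] at c5
    rw [c3, c4] at c5
    linarith
  -- Equation (ii) from σ₂
  have eqII : pdy (Hf f) q * pdx f q + Hf f q * pdy (pdx f) q
      = (pdx B q - (pdx b q * D1 f σ₁ q + b q * pdx (D1 f σ₁) q)) * pdy f q
        + (B q - b q * D1 f σ₁ q) * pdy (pdx f) q := by
    have c1 : pdx (pdy σ₂) q
        = pdx (fun p => -((B p - b p * D1 f σ₁ p) * pdy f p)) q :=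
      pdx_congr hU E3 hq
    have c2 : pdx (fun p => -((B p - b p * D1 f σ₁ p) * pdy f p)) q
        = -(((pdx B q - (pdx b q * D1 f σ₁ q + b q * pdx (D1 f σ₁) q)) * pdy f q)
            + (B q - b q * D1 f σ₁ q) * pdx (pdy f) q) :=
      ((((hasDerivAt_pdx dB).sub ((hasDerivAt_pdx db).mul (hasDerivAt_pdx ds))).mul
        (hasDerivAt_pdx dpyf)).neg).deriv
    have c3 : pdy (pdx σ₂) q = pdy (fun p => -(Hf f p * pdx f p)) q :=
      pdy_congr hU E2 hq
    have c4 : pdy (fun p => -(Hf f p * pdx f p)) q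
        = -(pdy (Hf f) q * pdx f q + Hf f q * pdy (pdx f) q) :=
      (((hasDerivAt_pdy dH).mul (hasDerivAt_pdy dpxf)).neg).deriv
    have c5 := clairaut hU hσ₂ hq
    rw [c1, c2, cf] at c5
    rw [c3, c4] at c5
    linarith
  have hfx0 := hfx q hq
  have hfy0 := hfy q hq
  have hb0 := hbne q hq
  constructor
  · -- Goal 1
    have key : D1 f (D1 f σ₁) q = -(pdx (D1 f σ₁) q) / pdx f q := rfl
    rw [key]
    have hB1 : D1 f B q = -(pdx B q) / pdx f q := rfl
    have hH2 : D2 f (Hf f) q = -(pdy (Hf f) q) / pdy f q := rfl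
    have hb1 : D1 f b q = -(pdx b q) / pdx f q := rfl
    rw [hB1, hH2, hb1]
    field_simp
    linear_combination (-1 : ℝ) * eqII - (Hf f q - B q + b q * D1 f σ₁ q) * E0
  · -- Goal 2
    have key : D2 f (D2 f σ₂) q = -(pdy (D2 f σ₂) q) / pdy f q := rfl
    rw [key]
    have c1 : pdy (D2 f σ₂) q = pdy (fun p => B p - b p * D1 f σ₁ p) q :=
      pdy_congr hU E3' hq
    have c2 : pdy (fun p => B p - b p * D1 f σ₁ p) q
        = pdy B q - (pdy b q * D1 f σ₁ q + b q * pdy (D1 f σ₁) q) :=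
      ((hasDerivAt_pdy dB).sub ((hasDerivAt_pdy db).mul (hasDerivAt_pdy ds))).deriv
    rw [c1, c2]
    have hB2 : D2 f B q = -(pdy B q) / pdy f q := rfl
    have hH1 : D1 f (Hf f) q = -(pdx (Hf f) q) / pdx f q := rfl
    have hb2 : D2 f b q = -(pdy b q) / pdy f q := rfl
    rw [hB2, hH1, hb2]
    field_simp
    linear_combination b q * eqI - b q * (Hf f q - D1 f σ₁ q) * E0
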